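/- Let f : ℝ^d → ℝ be L-smooth, let f, h be twice continuously differentiable and satisfy δ-Hessian similarity with δ > 0, let K ≥ 1 be an integer, and let 0 < η ≤ min(1/L, 1/(192δK)). Given x, m ∈ ℝ^d, define y_0 = x and y_k = y_{k−1} − η(∇h(y_{k−1}) + m) for k = 1,…,K, and set e = m − ∇f(x) + ∇h(x). Then (η/4) Σ_{k=0}^{K−1} ‖∇f(y_k)‖² ≤ f(x) − f(y_K) − δ‖y_K − x‖² + 2ηK‖e‖². -/

import Mathlib

/-!
With `u k = ∇h (y k) + m`, the local steps are gradient steps on `f` with error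
`u k - ∇f (y k) = (∇(h - f) (y k) - ∇(h - f) x) + e`; Hessian similarity makes `∇(h - f)`
`δ`-Lipschitz, so the error is at most `δ ‖y k - x‖ + ‖e‖`. An inexact step with `η L ≤ 1`
decreases `f` by `η/2 ‖∇f (y k)‖²` up to `η/2` times the squared error. The drift
`‖y k - x‖²` is bounded by `6 η² K ∑ (‖∇f (y j)‖² + ‖e‖²)` through a self-bounding induction,
which closes because `η δ K ≤ 1/192`; the drift terms and `δ ‖y K - x‖²` then cost at most
`η/16 (∑ ‖∇f (y k)‖² + K ‖e‖²)`.
-/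

open Finset InnerProductSpace RealInnerProductSpace

theorem norm_fderiv_sub_le_of_norm_iteratedFDeriv_two_le
    {E F : Type*} [NormedAddCommGroup E] [NormedSpace ℝ E]
    [NormedAddCommGroup F] [NormedSpace ℝ F] {g : E → F} {δ : ℝ} (hg : ContDiff ℝ 2 g)
    (hbound : ∀ z, ‖iteratedFDeriv ℝ 2 g z‖ ≤ δ) (u v : E) :
    ‖fderiv ℝ g u - fderiv ℝ g v‖ ≤ δ * ‖u - v‖ := by
  have hsecond : ∀ z ∈ Set.univ, ‖fderiv ℝ (fderiv ℝ g) z‖ ≤ δ := fun z _ => by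
    rw [← norm_iteratedFDeriv_one, norm_iteratedFDeriv_fderiv]
    exact hbound z
  have hdiff : Differentiable ℝ (fderiv ℝ g) :=
    (hg.fderiv_right (m := 1) le_rfl).differentiable one_ne_zero
  exact convex_univ.norm_image_sub_le_of_norm_fderiv_le (fun z _ => hdiff z) hsecond
    (Set.mem_univ v) (Set.mem_univ u)

theorem sub_eq_neg_smul_sum_of_steps {R M : Type*} [Ring R] [AddCommGroup M] [Module R M]
    {η : R} {K : ℕ} {y u : ℕ → M} (hstep : ∀ k < K, y (k + 1) = y k - η • u k) {k : ℕ}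
    (hk : k ≤ K) : y k - y 0 = -(η • ∑ j ∈ range k, u j) := by
  rw [← sum_range_sub y, smul_sum, ← sum_neg_distrib]
  refine sum_congr rfl fun j hj => ?_
  rw [hstep j ((mem_range.1 hj).trans_le hk), sub_sub_cancel_left]

variable {E : Type*} [NormedAddCommGroup E] [InnerProductSpace ℝ E] [CompleteSpace E]

theorem norm_gradient_sub_sub_le_of_norm_iteratedFDeriv_two_sub_le {f h : E → ℝ} {δ : ℝ}
    (hf : ContDiff ℝ 2 f) (hh : ContDiff ℝ 2 h)
    (hsim : ∀ x, ‖iteratedFDeriv ℝ 2 f x - iteratedFDeriv ℝ 2 h x‖ ≤ δ) (u v : E) :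
    ‖(gradient h u - gradient f u) - (gradient h v - gradient f v)‖ ≤ δ * ‖u - v‖ := by
  have hgap : ∀ z, gradient h z - gradient f z = (toDual ℝ E).symm (fderiv ℝ (h - f) z) :=
    fun z => by
      rw [fderiv_sub (hh.differentiable two_ne_zero z) (hf.differentiable two_ne_zero z),
        map_sub, gradient, gradient]
  rw [hgap, hgap, ← map_sub, LinearIsometryEquiv.norm_map]
  refine norm_fderiv_sub_le_of_norm_iteratedFDeriv_two_le (g := h - f) (hh.sub hf)
    (fun z => ?_) u v
  rw [iteratedFDeriv_sub_apply hh.contDiffAt hf.contDiffAt, norm_sub_rev]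
  exact hsim z

theorem hasDerivAt_comp_add_smul {f : E → ℝ} (hf : Differentiable ℝ f) (a v : E) (t : ℝ) :
    HasDerivAt (fun t : ℝ => f (a + t • v)) ⟪gradient f (a + t • v), v⟫ t := by
  have hline : HasDerivAt (fun t : ℝ => a + t • v) v t := by
    simpa using ((hasDerivAt_id t).smul_const v).const_add a
  exact (hf (a + t • v)).hasGradientAt.hasFDerivAt.comp_hasDerivAt t hline

theorem image_le_add_inner_gradient_add_sq {f : E → ℝ} {L : ℝ} (hf : Differentiable ℝ f)
    (hsmooth : ∀ x y, ‖gradient f x - gradient f y‖ ≤ L * ‖x - y‖) (a b : E) :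
    f b ≤ f a + ⟪gradient f a, b - a⟫ + L / 2 * ‖b - a‖ ^ 2 := by
  set v := b - a
  set ψ : ℝ → ℝ := fun t => f (a + t • v) - t * ⟪gradient f a, v⟫ - L / 2 * t ^ 2 * ‖v‖ ^ 2
  have hψ : ∀ t, HasDerivAt ψ (⟪gradient f (a + t • v) - gradient f a, v⟫ - L * t * ‖v‖ ^ 2) t :=
    fun t => (((hasDerivAt_comp_add_smul hf a v t).sub
      ((hasDerivAt_id t).mul_const ⟪gradient f a, v⟫)).sub
      (((hasDerivAt_pow 2 t).const_mul (L / 2)).mul_const (‖v‖ ^ 2))).congr_deriv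
      (by rw [inner_sub_left]; ring)
  have hψ_nonpos :
      ∀ t, 0 ≤ t → ⟪gradient f (a + t • v) - gradient f a, v⟫ - L * t * ‖v‖ ^ 2 ≤ 0 := by
    intro t ht
    have hlip : ‖gradient f (a + t • v) - gradient f a‖ ≤ L * (t * ‖v‖) := by
      simpa [norm_smul, abs_of_nonneg ht] using hsmooth (a + t • v) a
    nlinarith [real_inner_le_norm (gradient f (a + t • v) - gradient f a) v, norm_nonneg v]
  have hanti : AntitoneOn ψ (Set.Ici 0) :=
    antitoneOn_of_hasDerivWithinAt_nonpos (convex_Ici 0)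
      (fun t _ => (hψ t).continuousAt.continuousWithinAt)
      (fun t _ => (hψ t).hasDerivWithinAt)
      (fun t ht => hψ_nonpos t (interior_subset ht))
  have := hanti Set.self_mem_Ici (Set.mem_Ici.2 zero_le_one) zero_le_one
  simp only [ψ, v, one_smul, zero_smul, add_zero, add_sub_cancel] at this
  linarith

theorem image_sub_smul_le_of_lipschitz_gradient {f : E → ℝ} {L : ℝ} (hf : Differentiable ℝ f)
    (hsmooth : ∀ x y, ‖gradient f x - gradient f y‖ ≤ L * ‖x - y‖) {η : ℝ} (hη : 0 ≤ η)
    (hηL : η * L ≤ 1) (y u : E) :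
    f (y - η • u) ≤ f y - η / 2 * ‖gradient f y‖ ^ 2 + η / 2 * ‖u - gradient f y‖ ^ 2 := by
  have hdesc := image_le_add_inner_gradient_add_sq hf hsmooth y (y - η • u)
  rw [sub_sub_cancel_left, inner_neg_right, real_inner_smul_right, norm_neg, norm_smul,
    Real.norm_eq_abs, mul_pow, sq_abs] at hdesc
  rw [norm_sub_sq_real, real_inner_comm]
  nlinarith [mul_le_mul_of_nonneg_right hηL (mul_nonneg hη (sq_nonneg ‖u‖))]

theorem norm_sum_sq_le_card_mul_sum_norm_sq {ι F : Type*} [SeminormedAddCommGroup F]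
    (s : Finset ι) (v : ι → F) : ‖∑ i ∈ s, v i‖ ^ 2 ≤ #s * ∑ i ∈ s, ‖v i‖ ^ 2 :=
  (pow_le_pow_left₀ (norm_nonneg _) (norm_sum_le s v) 2).trans (sq_sum_le_card_mul_sum_sq ..)

theorem le_two_mul_sum_of_le_mul_sum {D g : ℕ → ℝ} {a b : ℝ} {K : ℕ} (ha : 0 ≤ a) (hb : 0 ≤ b)
    (hg : ∀ j, 0 ≤ g j) (habK : a * b * K ≤ 1 / 2)
    (hD : ∀ k ≤ K, D k ≤ a * ∑ j ∈ range k, (g j + b * D j)) :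
    ∀ k ≤ K, D k ≤ 2 * a * ∑ j ∈ range K, g j := by
  set G := ∑ j ∈ range K, g j
  have hG : 0 ≤ a * G := mul_nonneg ha (sum_nonneg fun j _ => hg j)
  intro k
  induction k using Nat.strong_induction_on with
  | _ k ih =>
    intro hk
    have hpartial : ∑ j ∈ range k, (g j + b * D j) ≤ G + K * (b * (2 * a * G)) := calc
      ∑ j ∈ range k, (g j + b * D j) ≤ ∑ j ∈ range k, (g j + b * (2 * a * G)) :=
        sum_le_sum fun j hj => by
          have := ih j (mem_range.1 hj) (by linarith [mem_range.1 hj])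
          gcongr
      _ = ∑ j ∈ range k, g j + k * (b * (2 * a * G)) := by
        rw [sum_add_distrib, sum_const, card_range, nsmul_eq_mul]
      _ ≤ G + K * (b * (2 * a * G)) := by
        gcongr
        · exact sum_le_sum_of_subset_of_nonneg (range_subset_range.2 hk) fun j _ _ => hg j
        · exact mul_nonneg hb (by linarith)
    calc D k ≤ a * (G + K * (b * (2 * a * G))) :=
          (hD k hk).trans (mul_le_mul_of_nonneg_left hpartial ha)
      _ = a * G + 2 * (a * b * K) * (a * G) := by ring
      _ ≤ 2 * a * G := by nlinarith

section BiasedGradientSteps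

variable {f : E → ℝ} {δ ε η : ℝ} {K : ℕ} {y u : ℕ → E}

theorem image_le_of_biased_gradient_steps {L : ℝ} (hf : Differentiable ℝ f)
    (hsmooth : ∀ x y, ‖gradient f x - gradient f y‖ ≤ L * ‖x - y‖) (hη : 0 ≤ η)
    (hηL : η * L ≤ 1) (hstep : ∀ k < K, y (k + 1) = y k - η • u k)
    (herr : ∀ k < K, ‖u k - gradient f (y k)‖ ≤ δ * ‖y k - y 0‖ + ε) :
    f (y K) ≤ f (y 0) - η / 2 * ∑ k ∈ range K, ‖gradient f (y k)‖ ^ 2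
      + η * ∑ k ∈ range K, (δ ^ 2 * ‖y k - y 0‖ ^ 2 + ε ^ 2) := by
  have hterm : ∀ k ∈ range K, f (y (k + 1)) - f (y k)
      ≤ -(η / 2 * ‖gradient f (y k)‖ ^ 2) + η * (δ ^ 2 * ‖y k - y 0‖ ^ 2 + ε ^ 2) := by
    intro k hk
    have hk := mem_range.1 hk
    have hdesc := image_sub_smul_le_of_lipschitz_gradient hf hsmooth hη hηL (y k) (u k)
    rw [← hstep k hk] at hdesc
    have herr_sq : ‖u k - gradient f (y k)‖ ^ 2 ≤ 2 * (δ ^ 2 * ‖y k - y 0‖ ^ 2 + ε ^ 2) := by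
      nlinarith [herr k hk, norm_nonneg (u k - gradient f (y k)), sq_nonneg (δ * ‖y k - y 0‖ - ε)]
    nlinarith
  have := sum_le_sum hterm
  rw [sum_range_sub (fun k => f (y k)), sum_add_distrib, sum_neg_distrib, ← mul_sum,
    ← mul_sum] at this
  linarith

theorem norm_sub_sq_le_of_biased_gradient_steps (hstep : ∀ k < K, y (k + 1) = y k - η • u k)
    (herr : ∀ k < K, ‖u k - gradient f (y k)‖ ≤ δ * ‖y k - y 0‖ + ε)
    (hηδK : 6 * (η * δ * K) ^ 2 ≤ 1) :
    ∀ k ≤ K, ‖y k - y 0‖ ^ 2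
      ≤ 6 * η ^ 2 * K * ∑ j ∈ range K, (‖gradient f (y j)‖ ^ 2 + ε ^ 2) := by
  have hu : ∀ j < K,
      ‖u j‖ ^ 2 ≤ 3 * (‖gradient f (y j)‖ ^ 2 + ε ^ 2 + δ ^ 2 * ‖y j - y 0‖ ^ 2) := by
    intro j hj
    have hnorm : ‖u j‖ ≤ ‖gradient f (y j)‖ + δ * ‖y j - y 0‖ + ε := by
      have := norm_le_insert' (u j) (gradient f (y j))
      linarith [herr j hj]
    nlinarith [norm_nonneg (u j), sq_nonneg (‖gradient f (y j)‖ - δ * ‖y j - y 0‖),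
      sq_nonneg (‖gradient f (y j)‖ - ε), sq_nonneg (δ * ‖y j - y 0‖ - ε)]
  have key := le_two_mul_sum_of_le_mul_sum (D := fun k => ‖y k - y 0‖ ^ 2)
    (g := fun j => ‖gradient f (y j)‖ ^ 2 + ε ^ 2) (a := 3 * η ^ 2 * K) (b := δ ^ 2) (K := K)
    (by positivity) (sq_nonneg δ) (fun j => by positivity) (by nlinarith) ?_
  · exact fun k hk => by linarith [key k hk]
  intro k hk
  rw [sub_eq_neg_smul_sum_of_steps hstep hk, norm_neg, norm_smul, mul_pow, Real.norm_eq_abs,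
    sq_abs]
  calc η ^ 2 * ‖∑ j ∈ range k, u j‖ ^ 2 ≤ η ^ 2 * (k * ∑ j ∈ range k, ‖u j‖ ^ 2) := by
        gcongr
        simpa using norm_sum_sq_le_card_mul_sum_norm_sq (range k) u
    _ ≤ η ^ 2 * (K * ∑ j ∈ range k, 3 * (‖gradient f (y j)‖ ^ 2 + ε ^ 2
        + δ ^ 2 * ‖y j - y 0‖ ^ 2)) := by
        gcongr with j hj
        exact hu j ((mem_range.1 hj).trans_le hk)
    _ = 3 * η ^ 2 * K * ∑ j ∈ range k, (‖gradient f (y j)‖ ^ 2 + ε ^ 2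
        + δ ^ 2 * ‖y j - y 0‖ ^ 2) := by
        rw [← mul_sum]; ring

theorem sum_norm_gradient_sq_le_of_biased_gradient_steps {L : ℝ} (hf : Differentiable ℝ f)
    (hsmooth : ∀ x y, ‖gradient f x - gradient f y‖ ≤ L * ‖x - y‖) (hη : 0 ≤ η)
    (hηL : η * L ≤ 1) (hδ : 0 ≤ δ) (hηδK : η * δ * K ≤ 1 / 192)
    (hstep : ∀ k < K, y (k + 1) = y k - η • u k)
    (herr : ∀ k < K, ‖u k - gradient f (y k)‖ ≤ δ * ‖y k - y 0‖ + ε) :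
    η / 4 * ∑ k ∈ range K, ‖gradient f (y k)‖ ^ 2
      ≤ f (y 0) - f (y K) - δ * ‖y K - y 0‖ ^ 2 + 2 * η * K * ε ^ 2 := by
  set A := ∑ k ∈ range K, ‖gradient f (y k)‖ ^ 2
  set C := 6 * η ^ 2 * K * ∑ j ∈ range K, (‖gradient f (y j)‖ ^ 2 + ε ^ 2)
  have ht : 0 ≤ η * δ * K := by positivity
  have hdrift := norm_sub_sq_le_of_biased_gradient_steps hstep herr (by nlinarith)
  have hdesc := image_le_of_biased_gradient_steps hf hsmooth hη hηL hstep herr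
  have hsum : ∑ k ∈ range K, (δ ^ 2 * ‖y k - y 0‖ ^ 2 + ε ^ 2) ≤ K * (δ ^ 2 * C + ε ^ 2) := by
    calc ∑ k ∈ range K, (δ ^ 2 * ‖y k - y 0‖ ^ 2 + ε ^ 2)
        ≤ ∑ k ∈ range K, (δ ^ 2 * C + ε ^ 2) :=
          sum_le_sum fun k hk => by gcongr; exact hdrift k (mem_range.1 hk).le
      _ = K * (δ ^ 2 * C + ε ^ 2) := by rw [sum_const, card_range, nsmul_eq_mul]
  have hC : δ * C = 6 * (η * δ * K) * (η * (A + K * ε ^ 2)) := by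
    simp only [C, A, sum_add_distrib, sum_const, card_range, nsmul_eq_mul]; ring
  have hηA : 0 ≤ η * A := by positivity
  have hηKε : 0 ≤ η * K * ε ^ 2 := by positivity
  have hδC : δ * C ≤ (η * A + η * K * ε ^ 2) / 32 := by
    rw [hC]; nlinarith [mul_le_mul_of_nonneg_right hηδK (add_nonneg hηA hηKε)]
  have hδD : δ * ‖y K - y 0‖ ^ 2 ≤ δ * C := mul_le_mul_of_nonneg_left (hdrift K le_rfl) hδ
  have hηS : η * ∑ k ∈ range K, (δ ^ 2 * ‖y k - y 0‖ ^ 2 + ε ^ 2)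
      ≤ η * δ * K * (δ * C) + η * K * ε ^ 2 := by
    nlinarith [mul_le_mul_of_nonneg_left hsum hη]
  have htδC : η * δ * K * (δ * C) ≤ δ * C / 192 := by
    nlinarith [mul_le_mul_of_nonneg_right hηδK (hδD.trans' (by positivity) : 0 ≤ δ * C)]
  linarith

end BiasedGradientSteps

/-- per-round descent inequality (noiseless case) for one full
cycle of `K` bias-corrected local steps. -/
theorem stmt_8 {d : ℕ} (f h : EuclideanSpace ℝ (Fin d) → ℝ) (L δ : ℝ)
    (hL : 0 < L) (hδ : 0 < δ)
    (hfd : Differentiable ℝ f)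
    (hsmooth : ∀ x y : EuclideanSpace ℝ (Fin d),
      ‖gradient f x - gradient f y‖ ≤ L * ‖x - y‖)
    (hf : ContDiff ℝ 2 f) (hh : ContDiff ℝ 2 h)
    (hsim : ∀ x, ‖iteratedFDeriv ℝ 2 f x - iteratedFDeriv ℝ 2 h x‖ ≤ δ)
    (K : ℕ) (hK : 1 ≤ K)
    (η : ℝ) (hη0 : 0 < η) (hη : η ≤ min (1 / L) (1 / (192 * δ * K)))
    (x m : EuclideanSpace ℝ (Fin d))
    (y : ℕ → EuclideanSpace ℝ (Fin d)) (hy0 : y 0 = x)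
    (hyk : ∀ k, 1 ≤ k → k ≤ K →
      y k = y (k - 1) - η • (gradient h (y (k - 1)) + m))
    (e : EuclideanSpace ℝ (Fin d)) (he : e = m - gradient f x + gradient h x) :
    (η / 4) * ∑ k ∈ Finset.range K, ‖gradient f (y k)‖ ^ 2
      ≤ f x - f (y K) - δ * ‖y K - x‖ ^ 2 + 2 * η * K * ‖e‖ ^ 2 := by
  subst hy0 he
  obtain ⟨hηL, hηδK⟩ := le_min_iff.1 hη
  replace hηL : η * L ≤ 1 := by simpa using (le_div_iff₀ hL).1 hηL
  replace hηδK : η * δ * K ≤ 1 / 192 := by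
    have := (le_div_iff₀ (by positivity : (0 : ℝ) < 192 * δ * K)).1 hηδK
    linarith
  have hstep : ∀ k < K, y (k + 1) = y k - η • (gradient h (y k) + m) := fun k hk => by
    simpa using hyk (k + 1) (by omega) (by omega)
  refine sum_norm_gradient_sq_le_of_biased_gradient_steps (u := fun k => gradient h (y k) + m)
    (ε := ‖m - gradient f (y 0) + gradient h (y 0)‖) hfd hsmooth hη0.le hηL hδ.le hηδK
    hstep fun k _ => ?_
  have hgap := norm_gradient_sub_sub_le_of_norm_iteratedFDeriv_two_sub_le hf hh hsim (y k) (y 0)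
  have hsplit : gradient h (y k) + m - gradient f (y k)
      = ((gradient h (y k) - gradient f (y k)) - (gradient h (y 0) - gradient f (y 0)))
          + (m - gradient f (y 0) + gradient h (y 0)) := by abel
  rw [hsplit]
  exact (norm_add_le _ _).trans (by linarith)
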